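/- For every q ∈ ℂ with |q| < 1, one has f(q,q⁹)·f(q³,q⁷) = χ(q)·f(−q⁵)·f(−q²⁰), where f(a,b) is Ramanujan's general theta function and χ(q) = (−q;q²)∞. -/

import Mathlib

open Complex

/-- The `q`-Pochhammer infinite product `(a; q)∞ = ∏_{n=0}^∞ (1 - a qⁿ)`. -/
noncomputable def qPoch (a q : ℂ) : ℂ := ∏' n : ℕ, (1 - a * q ^ n)


/-- Ramanujan's general theta function `f(a,b) = ∑_{n ∈ ℤ} a^{n(n+1)/2} b^{n(n-1)/2}`. -/
noncomputable def ramTheta (a b : ℂ) : ℂ :=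
  ∑' n : ℤ, a ^ (n * (n + 1) / 2).toNat * b ^ (n * (n - 1) / 2).toNat

/-!
Jacobi's triple product identity in Ramanujan's form, `f(a,b) = (-a;ab)∞ (-b;ab)∞ (ab;ab)∞`,
writes the left side as `(-q,-q³,-q⁷,-q⁹;q¹⁰)∞ (q¹⁰;q¹⁰)∞²`. The right side takes the same form
after 5-dissecting `(-q;q²)∞`, 2-dissecting `(q⁵;q⁵)∞`, and using
`(q¹⁰;q¹⁰)∞ = (q⁵;q¹⁰)∞ (-q⁵;q¹⁰)∞ (q²⁰;q²⁰)∞`.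

The triple product is the limit `N → ∞` of its finite form
`∏_{j<N} (1 + x p^{2j+1}) (1 + x⁻¹ p^{2j+1}) = ∑_m p^{m²} x^m [2N, N+m]_{p²}`,
which follows by induction from the two Pascal rules for Gaussian binomials. Since
`(Q;Q)_{2N} [2N, N+m]_Q = (Q;Q)_{2N}² / ((Q;Q)_{N+m} (Q;Q)_{N-m})` tends to `1` and stays bounded,
Tannery's theorem passes to the limit.
-/

open Filter Finset Topology

lemma norm_pow_lt_one {𝕜 : Type*} [NormedDivisionRing 𝕜] {q : 𝕜} (hq : ‖q‖ < 1) {k : ℕ}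
    (hk : k ≠ 0) : ‖q ^ k‖ < 1 := by
  rw [norm_pow]
  exact pow_lt_one₀ (norm_nonneg q) hq hk

lemma Filter.Tendsto.exists_norm_le_and_norm_inv_le {𝕜 : Type*} [NormedField 𝕜] {u : ℕ → 𝕜}
    {l : 𝕜} (hu : Tendsto u atTop (𝓝 l)) (hl : l ≠ 0) :
    ∃ C, ∀ n, ‖u n‖ ≤ C ∧ ‖(u n)⁻¹‖ ≤ C := by
  obtain ⟨C₁, hC₁⟩ := isBounded_iff_forall_norm_le.1 (Metric.isBounded_range_of_tendsto u hu)
  obtain ⟨C₂, hC₂⟩ := isBounded_iff_forall_norm_le.1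
    (Metric.isBounded_range_of_tendsto _ (hu.inv₀ hl))
  exact ⟨max C₁ C₂, fun n ↦ ⟨(hC₁ _ ⟨n, rfl⟩).trans (le_max_left _ _),
    (hC₂ _ ⟨n, rfl⟩).trans (le_max_right _ _)⟩⟩

lemma tsum_mul_add_mul_sub_one_add_mul_add_one {R : Type*} [Ring R] [TopologicalSpace R]
    [IsTopologicalRing R] [T2Space R] {t : ℤ → R} (ht : Summable t) (a b c : R) :
    ∑' m, (a * t m + b * t (m - 1) + c * t (m + 1)) = (a + b + c) * ∑' m, t m := by
  have hsub : Summable fun m ↦ t (m - 1) := (Equiv.subRight (1 : ℤ)).summable_iff.2 ht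
  have hadd : Summable fun m ↦ t (m + 1) := (Equiv.addRight (1 : ℤ)).summable_iff.2 ht
  rw [((ht.mul_left a).add (hsub.mul_left b)).tsum_add (hadd.mul_left c),
    (ht.mul_left a).tsum_add (hsub.mul_left b), ht.tsum_mul_left, hsub.tsum_mul_left,
    hadd.tsum_mul_left, show ∑' m, t (m - 1) = ∑' m, t m from (Equiv.subRight (1 : ℤ)).tsum_eq t,
    show ∑' m, t (m + 1) = ∑' m, t m from (Equiv.addRight (1 : ℤ)).tsum_eq t, add_mul, add_mul]

noncomputable def qPochFin (a q : ℂ) (n : ℕ) : ℂ := ∏ j ∈ range n, (1 - a * q ^ j)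

@[simp]
lemma qPochFin_zero (a q : ℂ) : qPochFin a q 0 = 1 := prod_range_zero _

lemma qPochFin_succ (a q : ℂ) (n : ℕ) :
    qPochFin a q (n + 1) = qPochFin a q n * (1 - a * q ^ n) :=
  prod_range_succ _ _

lemma qPochFin_ne_zero {a q : ℂ} (ha : ∀ n, a * q ^ n ≠ 1) (n : ℕ) : qPochFin a q n ≠ 0 :=
  prod_ne_zero_iff.2 fun j _ ↦ sub_ne_zero.2 (ha j).symm

@[simp]
lemma qPoch_zero_left (q : ℂ) : qPoch 0 q = 1 := by simp [qPoch]

lemma mul_pow_ne_one_of_norm_lt_one {Q : ℂ} (hQ : ‖Q‖ < 1) (n : ℕ) : Q * Q ^ n ≠ 1 := by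
  rw [← pow_succ']
  intro h
  simpa [h] using norm_pow_lt_one hQ n.succ_ne_zero

section qPoch

variable {q : ℂ} (hq : ‖q‖ < 1)
include hq

lemma summable_norm_mul_pow (a : ℂ) : Summable fun n : ℕ ↦ ‖a * q ^ n‖ := by
  simpa [norm_mul, norm_pow] using
    (summable_geometric_of_lt_one (norm_nonneg q) hq).mul_left ‖a‖

lemma multipliable_one_sub_mul_pow (a : ℂ) : Multipliable fun n : ℕ ↦ 1 - a * q ^ n := by
  simpa [sub_eq_add_neg] using
    multipliable_one_add_of_summable (f := fun n : ℕ ↦ -(a * q ^ n))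
      (by simpa using summable_norm_mul_pow hq a)

lemma tendsto_qPochFin (a : ℂ) : Tendsto (qPochFin a q) atTop (𝓝 (qPoch a q)) :=
  (multipliable_one_sub_mul_pow hq a).hasProd.tendsto_prod_nat

lemma qPoch_ne_zero {a : ℂ} (ha : ∀ n, a * q ^ n ≠ 1) : qPoch a q ≠ 0 := by
  simpa [qPoch, sub_eq_add_neg] using
    tprod_one_add_ne_zero_of_summable (f := fun n : ℕ ↦ -(a * q ^ n))
      (fun n ↦ by rw [← sub_eq_add_neg]; exact sub_ne_zero.2 (ha n).symm)
      (by simpa using summable_norm_mul_pow hq a)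

lemma qPoch_eq_prod_range (a : ℂ) {k : ℕ} (hk : 0 < k) :
    qPoch a q = ∏ i ∈ range k, qPoch (a * q ^ i) (q ^ k) := by
  have : NeZero k := ⟨hk.ne'⟩
  -- `(i, t) ↦ t k + i` enumerates `ℕ` by residue classes mod `k`
  let e : Fin k × ℕ ≃ ℕ := (Equiv.prodComm _ _).trans (Nat.divModEquiv k).symm
  have he : ∀ p : Fin k × ℕ, 1 - a * q ^ e p = 1 - a * q ^ (p.1 : ℕ) * (q ^ k) ^ p.2 :=
    fun p ↦ by simp only [e, Equiv.trans_apply, Equiv.prodComm_apply, Prod.fst_swap,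
      Prod.snd_swap, Nat.divModEquiv_symm_apply]; ring
  calc qPoch a q = ∏' p : Fin k × ℕ, (1 - a * q ^ (p.1 : ℕ) * (q ^ k) ^ p.2) :=
        (e.tprod_eq (fun n ↦ 1 - a * q ^ n)).symm.trans (tprod_congr he)
    _ = ∏ i : Fin k, qPoch (a * q ^ (i : ℕ)) (q ^ k) := by
        rw [((e.multipliable_iff.2 (multipliable_one_sub_mul_pow hq a)).congr he).tprod_prod'
          fun i ↦ multipliable_one_sub_mul_pow (norm_pow_lt_one hq hk.ne') (a * q ^ (i : ℕ)),
          tprod_fintype]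
        rfl
    _ = ∏ i ∈ range k, qPoch (a * q ^ i) (q ^ k) :=
        Fin.prod_univ_eq_prod_range (fun i ↦ qPoch (a * q ^ i) (q ^ k)) k

lemma qPoch_mul_qPoch_neg (a : ℂ) : qPoch a q * qPoch (-a) q = qPoch (a ^ 2) (q ^ 2) := by
  rw [qPoch, qPoch, ← (multipliable_one_sub_mul_pow hq a).tprod_mul
    (multipliable_one_sub_mul_pow hq (-a)), qPoch]
  exact tprod_congr fun n ↦ by ring

end qPoch

/-- The Gaussian binomial coefficient `[n, k]_Q`, extended by `0` to all `k ∈ ℤ`. -/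
noncomputable def qBinom (Q : ℂ) : ℕ → ℤ → ℂ
  | 0, k => if k = 0 then 1 else 0
  | n + 1, k => qBinom Q n (k - 1) + Q ^ k * qBinom Q n k

section qBinom

variable {Q : ℂ}

lemma qBinom_succ (n : ℕ) (k : ℤ) :
    qBinom Q (n + 1) k = qBinom Q n (k - 1) + Q ^ k * qBinom Q n k := rfl

lemma qBinom_eq_zero {n : ℕ} {k : ℤ} (hk : k < 0 ∨ n < k) : qBinom Q n k = 0 := by
  induction n generalizing k with
  | zero => simp only [qBinom, ite_eq_right_iff, one_ne_zero, imp_false]; omega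
  | succ n ih => rw [qBinom_succ, ih (by omega), ih (by omega), mul_zero, add_zero]

lemma qBinom_zero_right (n : ℕ) : qBinom Q n 0 = 1 := by
  induction n with
  | zero => simp [qBinom]
  | succ n ih => rw [qBinom_succ, qBinom_eq_zero (by omega), ih, zpow_zero, zero_add, one_mul]

lemma qBinom_self (n : ℕ) : qBinom Q n n = 1 := by
  induction n with
  | zero => simp [qBinom]
  | succ n ih =>
    rw [qBinom_succ, Nat.cast_succ, add_sub_cancel_right, ih, qBinom_eq_zero (by omega), mul_zero,
      add_zero]

lemma qBinom_succ' (hQ : Q ≠ 0) (n : ℕ) (k : ℤ) :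
    qBinom Q (n + 1) k = qBinom Q n k + Q ^ ((n : ℤ) + 1 - k) * qBinom Q n (k - 1) := by
  induction n generalizing k with
  | zero =>
    rcases eq_or_ne k 0 with rfl | h0
    · simp [qBinom]
    rcases eq_or_ne k 1 with rfl | h1
    · simp [qBinom]
    simp [qBinom, h0, h1, sub_eq_zero]
  | succ n ih =>
    have hpow : Q ^ k * Q ^ ((n : ℤ) + 1 - k) = Q ^ (((n + 1 : ℕ) : ℤ) + 1 - k) * Q ^ (k - 1) := by
      rw [← zpow_add₀ hQ, ← zpow_add₀ hQ]; push_cast; ring_nf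
    have ih' := ih (k - 1)
    rw [show (n : ℤ) + 1 - (k - 1) = ((n + 1 : ℕ) : ℤ) + 1 - k by push_cast; ring] at ih'
    rw [qBinom_succ (n + 1) k]
    linear_combination ih' + Q ^ k * ih k - qBinom_succ n k
      - Q ^ (((n + 1 : ℕ) : ℤ) + 1 - k) * qBinom_succ n (k - 1) + qBinom Q n (k - 1) * hpow

lemma qBinom_add_mul_qPochFin (n k : ℕ) :
    qBinom Q (k + n) k * qPochFin Q Q k * qPochFin Q Q n = qPochFin Q Q (k + n) := by
  induction n generalizing k with
  | zero => simp [qBinom_self]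
  | succ n ihn =>
    induction k with
    | zero => simp [qBinom_zero_right]
    | succ k ihk =>
      have h := ihn (k + 1)
      rw [show k + 1 + n = k + (n + 1) by omega] at h
      rw [show k + 1 + (n + 1) = k + (n + 1) + 1 by omega, qBinom_succ, Nat.cast_succ,
        add_sub_cancel_right, ← Nat.cast_succ, zpow_natCast, Nat.succ_eq_add_one,
        qPochFin_succ Q Q (k + (n + 1))]
      linear_combination qBinom Q (k + (n + 1)) k * qPochFin Q Q (n + 1) * qPochFin_succ Q Q k
        + (1 - Q * Q ^ k) * ihk + Q ^ (k + 1) * (1 - Q * Q ^ n) * h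
        + Q ^ (k + 1) * qBinom Q (k + (n + 1)) (k + 1 : ℕ) * qPochFin Q Q (k + 1)
          * qPochFin_succ Q Q n

lemma qBinom_add_eq_div (hQ : ∀ j, qPochFin Q Q j ≠ 0) (k n : ℕ) :
    qBinom Q (k + n) k = qPochFin Q Q (k + n) / (qPochFin Q Q k * qPochFin Q Q n) := by
  rw [eq_div_iff (mul_ne_zero (hQ k) (hQ n)), ← mul_assoc, qBinom_add_mul_qPochFin]

lemma qBinom_two_mul_succ (hQ : Q ≠ 0) (N : ℕ) (m : ℤ) :
    qBinom Q (2 * (N + 1)) (N + 1 + m) = (1 + Q ^ (2 * N + 1)) * qBinom Q (2 * N) (N + m)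
      + Q ^ ((N : ℤ) + 1 - m) * qBinom Q (2 * N) (N + m - 1)
      + Q ^ ((N : ℤ) + 1 + m) * qBinom Q (2 * N) (N + m + 1) := by
  have hpow : Q ^ ((N : ℤ) + 1 + m) * Q ^ ((2 * N : ℕ) + 1 - ((N : ℤ) + 1 + m)) =
      Q ^ (2 * N + 1) := by
    rw [← zpow_add₀ hQ, ← zpow_natCast]; push_cast; ring_nf
  rw [show 2 * (N + 1) = 2 * N + 1 + 1 by ring, qBinom_succ, qBinom_succ' hQ, qBinom_succ' hQ,
    show (N : ℤ) + 1 + m - 1 = N + m by ring,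
    show ((2 * N : ℕ) : ℤ) + 1 - (N + m) = N + 1 - m by push_cast; ring,
    show (N : ℤ) + 1 + m = N + m + 1 by ring]
  rw [show (N : ℤ) + 1 + m = N + m + 1 by ring] at hpow
  linear_combination qBinom Q (2 * N) (N + m) * hpow

end qBinom

section theta

variable {p x : ℂ}

lemma summable_mul_qBinom_two_mul (f : ℤ → ℂ) (Q : ℂ) (N : ℕ) :
    Summable fun m : ℤ ↦ f m * qBinom Q (2 * N) (N + m) :=
  summable_of_ne_finset_zero (s := Icc (-(N : ℤ)) N) fun m hm ↦ by
    rw [qBinom_eq_zero (by simp only [mem_Icc, not_and_or, not_le] at hm; omega), mul_zero]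

lemma zpow_mul_qBinom_two_mul_succ (hp : p ≠ 0) (hx : x ≠ 0) (N : ℕ) (m : ℤ) :
    p ^ (m * m) * x ^ m * qBinom (p ^ 2) (2 * (N + 1)) ((N + 1 : ℕ) + m) =
      (1 + p ^ (4 * N + 2)) * (p ^ (m * m) * x ^ m * qBinom (p ^ 2) (2 * N) (N + m))
      + x * p ^ (2 * N + 1) *
        (p ^ ((m - 1) * (m - 1)) * x ^ (m - 1) * qBinom (p ^ 2) (2 * N) (N + (m - 1)))
      + x⁻¹ * p ^ (2 * N + 1) *
        (p ^ ((m + 1) * (m + 1)) * x ^ (m + 1) * qBinom (p ^ 2) (2 * N) (N + (m + 1))) := by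
  have hl : p ^ (m * m) * (p ^ 2) ^ ((N : ℤ) + 1 - m) =
      p ^ ((m - 1) * (m - 1)) * p ^ (2 * N + 1) := by
    rw [← zpow_natCast p 2, ← zpow_mul, ← zpow_natCast p (2 * N + 1), ← zpow_add₀ hp,
      ← zpow_add₀ hp]; push_cast; ring_nf
  have hr : p ^ (m * m) * (p ^ 2) ^ ((N : ℤ) + 1 + m) =
      p ^ ((m + 1) * (m + 1)) * p ^ (2 * N + 1) := by
    rw [← zpow_natCast p 2, ← zpow_mul, ← zpow_natCast p (2 * N + 1), ← zpow_add₀ hp,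
      ← zpow_add₀ hp]; push_cast; ring_nf
  have hxl : x ^ m = x ^ (m - 1) * x := by rw [← zpow_add_one₀ hx, sub_add_cancel]
  have hxr : x ^ m = x ^ (m + 1) * x⁻¹ := by rw [← zpow_sub_one₀ hx, add_sub_cancel_right]
  rw [Nat.cast_succ, qBinom_two_mul_succ (pow_ne_zero 2 hp), ← add_sub_assoc, ← add_assoc]
  linear_combination (x ^ m * qBinom (p ^ 2) (2 * N) (N + m - 1)) * hl
    + (x ^ m * qBinom (p ^ 2) (2 * N) (N + m + 1)) * hr
    + (p ^ ((m - 1) * (m - 1)) * p ^ (2 * N + 1) * qBinom (p ^ 2) (2 * N) (N + m - 1)) * hxl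
    + (p ^ ((m + 1) * (m + 1)) * p ^ (2 * N + 1) * qBinom (p ^ 2) (2 * N) (N + m + 1)) * hxr

lemma qPochFin_mul_qPochFin_eq_tsum (hp : p ≠ 0) (hx : x ≠ 0) (N : ℕ) :
    qPochFin (-(x * p)) (p ^ 2) N * qPochFin (-(x⁻¹ * p)) (p ^ 2) N =
      ∑' m : ℤ, p ^ (m * m) * x ^ m * qBinom (p ^ 2) (2 * N) (N + m) := by
  induction N with
  | zero =>
    rw [tsum_eq_single 0 fun m hm ↦ by simp [qBinom, hm]]
    simp [qBinom]
  | succ N ih =>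
    have hfactor : (1 - -(x * p) * (p ^ 2) ^ N) * (1 - -(x⁻¹ * p) * (p ^ 2) ^ N) =
        (1 + p ^ (4 * N + 2)) + x * p ^ (2 * N + 1) + x⁻¹ * p ^ (2 * N + 1) := by
      linear_combination (p ^ (4 * N + 2)) * mul_inv_cancel₀ hx
    rw [qPochFin_succ, qPochFin_succ, mul_mul_mul_comm, ih, hfactor, mul_comm,
      ← tsum_mul_add_mul_sub_one_add_mul_add_one (summable_mul_qBinom_two_mul _ _ N)]
    exact tsum_congr fun m ↦ (zpow_mul_qBinom_two_mul_succ hp hx N m).symm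

end theta

section limit

variable {Q : ℂ} (hQ : ‖Q‖ < 1)
include hQ

lemma qPochFin_mul_qBinom_two_mul {N : ℕ} {m : ℤ} (hm : m.natAbs ≤ N) :
    qPochFin Q Q (2 * N) * qBinom Q (2 * N) (N + m) =
      qPochFin Q Q (2 * N) ^ 2 / (qPochFin Q Q (N + m).toNat * qPochFin Q Q (N - m).toNat) := by
  have h2N : 2 * N = (N + m).toNat + (N - m).toNat := by omega
  have hNm : (N : ℤ) + m = ((N + m).toNat : ℕ) := by omega
  rw [hNm, h2N, qBinom_add_eq_div (qPochFin_ne_zero (mul_pow_ne_one_of_norm_lt_one hQ)), ← hNm]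
  ring

lemma tendsto_qPochFin_mul_qBinom_two_mul (m : ℤ) :
    Tendsto (fun N : ℕ ↦ qPochFin Q Q (2 * N) * qBinom Q (2 * N) (N + m)) atTop (𝓝 1) := by
  have hP := tendsto_qPochFin hQ Q
  have hP0 : qPoch Q Q ≠ 0 := qPoch_ne_zero hQ (mul_pow_ne_one_of_norm_lt_one hQ)
  have htwo : Tendsto (fun N : ℕ ↦ 2 * N) atTop atTop := tendsto_id.const_mul_atTop' two_pos
  have hplus : Tendsto (fun N : ℕ ↦ ((N : ℤ) + m).toNat) atTop atTop :=
    tendsto_atTop_atTop.2 fun b ↦ ⟨b + m.natAbs, fun N hN ↦ by omega⟩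
  have hminus : Tendsto (fun N : ℕ ↦ ((N : ℤ) - m).toNat) atTop atTop :=
    tendsto_atTop_atTop.2 fun b ↦ ⟨b + m.natAbs, fun N hN ↦ by omega⟩
  have hlim := ((hP.comp htwo).pow 2).div ((hP.comp hplus).mul (hP.comp hminus))
    (mul_ne_zero hP0 hP0)
  rw [← sq, div_self (pow_ne_zero 2 hP0)] at hlim
  refine hlim.congr' ?_
  filter_upwards [eventually_ge_atTop m.natAbs] with N hN
  exact (qPochFin_mul_qBinom_two_mul hQ hN).symm

lemma exists_norm_qPochFin_mul_qBinom_two_mul_le :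
    ∃ C, ∀ (N : ℕ) (m : ℤ), ‖qPochFin Q Q (2 * N) * qBinom Q (2 * N) (N + m)‖ ≤ C := by
  obtain ⟨C, hC⟩ := (tendsto_qPochFin hQ Q).exists_norm_le_and_norm_inv_le
    (qPoch_ne_zero hQ (mul_pow_ne_one_of_norm_lt_one hQ))
  have hC0 : 0 ≤ C := (norm_nonneg _).trans (hC 0).1
  refine ⟨C ^ 2 * C * C, fun N m ↦ ?_⟩
  rcases le_or_gt m.natAbs N with hm | hm
  · rw [qPochFin_mul_qBinom_two_mul hQ hm, div_eq_mul_inv, mul_inv, ← mul_assoc, norm_mul,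
      norm_mul, norm_pow]
    gcongr
    exacts [(hC _).1, (hC _).2, (hC _).2]
  · rw [qBinom_eq_zero (by omega), mul_zero, norm_zero]
    positivity

end limit

lemma summable_norm_zpow_mul_self_mul_zpow {p x : ℂ} (hp : ‖p‖ < 1) (hp0 : p ≠ 0) (hx : x ≠ 0) :
    Summable fun m : ℤ ↦ ‖p ^ (m * m) * x ^ m‖ := by
  have hterm : ∀ m : ℤ, p ^ (m * m) * x ^ m =
      jacobiTheta₂_term m (log x / (2 * Real.pi * I)) (log p / (Real.pi * I)) := fun m ↦ by
    have hexp : p ^ (m * m) * x ^ m = cexp (↑(m * m) * log p) * cexp (m * log x) := by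
      rw [exp_int_mul, exp_int_mul, exp_log hp0, exp_log hx]
    rw [hexp, jacobiTheta₂_term, ← exp_add]
    congr 1
    field_simp
    push_cast
    ring
  simp_rw [hterm]
  refine summable_norm_iff.2 ((summable_jacobiTheta₂_term_iff _ _).2 ?_)
  have hlog : Real.log ‖p‖ < 0 := Real.log_neg (norm_pos_iff.2 hp0) hp
  simpa [Complex.div_im, Complex.log_re] using
    div_neg_of_neg_of_pos (mul_neg_of_neg_of_pos hlog Real.pi_pos) (mul_pos Real.pi_pos Real.pi_pos)

theorem jacobi_triple_product {p x : ℂ} (hp : ‖p‖ < 1) (hp0 : p ≠ 0) (hx : x ≠ 0) :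
    ∑' m : ℤ, p ^ (m * m) * x ^ m =
      qPoch (p ^ 2) (p ^ 2) * qPoch (-(x * p)) (p ^ 2) * qPoch (-(x⁻¹ * p)) (p ^ 2) := by
  have hQ : ‖p ^ 2‖ < 1 := norm_pow_lt_one hp two_ne_zero
  obtain ⟨C, hC⟩ := exists_norm_qPochFin_mul_qBinom_two_mul_le hQ
  set w : ℕ → ℤ → ℂ := fun N m ↦
    qPochFin (p ^ 2) (p ^ 2) (2 * N) * qBinom (p ^ 2) (2 * N) (N + m)
  have hsum : Tendsto (fun N ↦ ∑' m : ℤ, p ^ (m * m) * x ^ m * w N m) atTop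
      (𝓝 (∑' m : ℤ, p ^ (m * m) * x ^ m)) := by
    refine tendsto_tsum_of_dominated_convergence
      ((summable_norm_zpow_mul_self_mul_zpow hp hp0 hx).mul_right C) (fun m ↦ ?_)
      (.of_forall fun N m ↦ ?_)
    · simpa using (tendsto_qPochFin_mul_qBinom_two_mul hQ m).const_mul (p ^ (m * m) * x ^ m)
    · rw [norm_mul]; gcongr; exact hC N m
  have hprod : Tendsto (fun N ↦ ∑' m : ℤ, p ^ (m * m) * x ^ m * w N m) atTop
      (𝓝 (qPoch (p ^ 2) (p ^ 2) * (qPoch (-(x * p)) (p ^ 2) * qPoch (-(x⁻¹ * p)) (p ^ 2)))) := by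
    have htwo : Tendsto (fun N : ℕ ↦ 2 * N) atTop atTop := tendsto_id.const_mul_atTop' two_pos
    refine (((tendsto_qPochFin hQ _).comp htwo).mul
      ((tendsto_qPochFin hQ _).mul (tendsto_qPochFin hQ _))).congr fun N ↦ ?_
    simp only [Function.comp_apply, w, qPochFin_mul_qPochFin_eq_tsum hp0 hx, ← tsum_mul_left]
    exact tsum_congr fun m ↦ by ring
  rw [tendsto_nhds_unique hsum hprod, mul_assoc]

lemma mul_pow_toNat_mul_inv_mul_pow_toNat {x p : ℂ} (hx : x ≠ 0) (hp : p ≠ 0) (n : ℤ) :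
    (x * p) ^ (n * (n + 1) / 2).toNat * (x⁻¹ * p) ^ (n * (n - 1) / 2).toNat =
      p ^ (n * n) * x ^ n := by
  obtain ⟨T, hT⟩ := Int.even_mul_succ_self n
  have h₁ : n * (n + 1) / 2 = T := by rw [hT]; omega
  have h₂ : n * (n - 1) / 2 = T - n := by
    rw [show n * (n - 1) = (T - n) + (T - n) by linear_combination hT]; omega
  have hpow : ∀ (z : ℂ) {k : ℤ}, 0 ≤ k → z ^ k.toNat = z ^ k := fun z k hk ↦ by
    rw [← zpow_natCast, Int.toNat_of_nonneg hk]
  have hn₁ : 0 ≤ n * (n + 1) := by rcases le_or_gt 0 n with h | h <;> nlinarith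
  have hn₂ : 0 ≤ n * (n - 1) := by rcases le_or_gt 0 n with h | h <;> nlinarith
  rw [h₁, h₂, hpow _ (by omega), hpow _ (by omega), mul_zpow, mul_zpow, inv_zpow',
    mul_mul_mul_comm, ← zpow_add₀ hx, ← zpow_add₀ hp, mul_comm,
    show T + (T - n) = n * n by linear_combination -hT, show T + -(T - n) = n by ring]

theorem ramTheta_eq_qPoch {a b : ℂ} (ha : a ≠ 0) (hb : b ≠ 0) (hab : ‖a * b‖ < 1) :
    ramTheta a b = qPoch (-a) (a * b) * qPoch (-b) (a * b) * qPoch (a * b) (a * b) := by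
  -- the triple product at `p = √(ab)`, `x = a / p`, so that `x p = a` and `x⁻¹ p = b`
  obtain ⟨p, hp⟩ := IsAlgClosed.exists_pow_nat_eq (a * b) two_pos
  have hp0 : p ≠ 0 := by rintro rfl; simp [ha, hb, eq_comm] at hp
  have hpn : ‖p‖ < 1 := by
    rw [← hp, norm_pow] at hab
    exact (pow_lt_one_iff_of_nonneg (norm_nonneg p) two_ne_zero).1 hab
  have hxp : a / p * p = a := div_mul_cancel₀ a hp0
  have hxb : (a / p)⁻¹ * p = b := by
    rw [inv_div, div_mul_eq_mul_div, ← sq, hp, mul_div_cancel_left₀ b ha]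
  have key := jacobi_triple_product hpn hp0 (div_ne_zero ha hp0)
  rw [hxp, hxb, hp] at key
  rw [← mul_comm (qPoch (a * b) (a * b)), ← mul_assoc, ← key, ramTheta]
  refine tsum_congr fun n ↦ ?_
  rw [← mul_pow_toNat_mul_inv_mul_pow_toNat (div_ne_zero ha hp0) hp0, hxp, hxb]

lemma ramTheta_zero_zero : ramTheta 0 0 = 1 := by
  rw [ramTheta, tsum_eq_single 0 fun n hn ↦ ?_]
  · simp
  rcases lt_or_gt_of_ne hn with h | h
  · have : 2 ≤ n * (n - 1) := by nlinarith
    rw [zero_pow (n := (n * (n - 1) / 2).toNat) (by omega), mul_zero]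
  · have : 2 ≤ n * (n + 1) := by nlinarith
    rw [zero_pow (n := (n * (n + 1) / 2).toNat) (by omega), zero_mul]

/-- For every `q ∈ ℂ` with `|q| < 1`,
`f(q,q⁹)·f(q³,q⁷) = χ(q)·f(−q⁵)·f(−q²⁰)`, where `χ(q) = (−q;q²)∞` and
`f(−q) = (q;q)∞ = qPoch q q`. -/
theorem statement1 (q : ℂ) (hq : ‖q‖ < 1) :
    ramTheta q (q ^ 9) * ramTheta (q ^ 3) (q ^ 7) =
      qPoch (-q) (q ^ 2) * qPoch (q ^ 5) (q ^ 5) * qPoch (q ^ 20) (q ^ 20) := by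
  rcases eq_or_ne q 0 with rfl | hq0
  · simp [ramTheta_zero_zero]
  have hq10 : ‖q ^ 10‖ < 1 := norm_pow_lt_one hq (by norm_num)
  have h₁ : qPoch (-q) (q ^ 2) = qPoch (-q) (q ^ 10) * qPoch (-q ^ 3) (q ^ 10) *
      qPoch (-q ^ 5) (q ^ 10) * qPoch (-q ^ 7) (q ^ 10) * qPoch (-q ^ 9) (q ^ 10) := by
    rw [qPoch_eq_prod_range (norm_pow_lt_one hq two_ne_zero) _ (by norm_num : 0 < 5)]
    simp only [prod_range_succ, prod_range_zero]
    ring_nf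
  have h₂ : qPoch (q ^ 5) (q ^ 5) = qPoch (q ^ 5) (q ^ 10) * qPoch (q ^ 10) (q ^ 10) := by
    rw [qPoch_eq_prod_range (norm_pow_lt_one hq (by norm_num)) _ (by norm_num : 0 < 2)]
    simp only [prod_range_succ, prod_range_zero]
    ring_nf
  have h₃ : qPoch (q ^ 10) (q ^ 10) =
      qPoch (q ^ 5) (q ^ 10) * qPoch (-q ^ 5) (q ^ 10) * qPoch (q ^ 20) (q ^ 20) := by
    rw [qPoch_eq_prod_range hq10 _ (by norm_num : 0 < 2), qPoch_mul_qPoch_neg hq10]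
    simp only [prod_range_succ, prod_range_zero]
    ring_nf
  rw [ramTheta_eq_qPoch hq0 (pow_ne_zero 9 hq0) (by rwa [← pow_succ']),
    ramTheta_eq_qPoch (pow_ne_zero 3 hq0) (pow_ne_zero 7 hq0) (by rwa [← pow_add]),
    show q * q ^ 9 = q ^ 10 by ring, show q ^ 3 * q ^ 7 = q ^ 10 by ring, h₁, h₂, h₃]
  ring
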